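/- Let K be an irreducible, aperiodic, substochastic kernel on countable S with spectral radius ρ. If for some x ∈ S, K^n(x,y)/K^n(x,S) → π_x(y) for all y where π_x is a probability measure, then π_x is ρ-invariant: ∑_z π_x(z) K(z,y) = ρ π_x(y) for all y ∈ S. -/

import Mathlib

open Filter Topology

open scoped Classical in
/-- Matrix powers of a kernel `K` on a countable state space. -/
noncomputable def Kpow {S : Type*} (K : S → S → ℝ) : ℕ → S → S → ℝ
  | 0 => fun x y => if x = y then 1 else 0
  | n + 1 => fun x y => ∑' z, Kpow K n x z * K z y

/-!
Write `s n = ∑' z, Kpow K n x z`. Since `π` charges some `y₀`, `s n` is comparable to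
`Kpow K n x y₀`, so `s n ^ (1 / n) → ρ`; hence `s (n + 1) ≤ θ * s n` infinitely often for every
`θ > ρ`. Along those times `Kpow K n x z * K z y ≤ Kpow K (n + 1) x y` yields
`π z * K z y ≤ ρ * π y`. By irreducibility `π` is then positive everywhere, so every row of `K`
is summable and `K ≤ 1`. Scheffé's lemma lets us pass to the limit in
`Kpow K (n + 1) x y / s n = ∑' z, (Kpow K n x z / s n) * K z y`, which gives
`s (n + 1) / s n → (∑' z, π z * K z y) / π y`; a ratio limit agrees with the root limit `ρ`.
-/

lemma summable_of_tsum_ne_zero {ι α : Type*} [AddCommMonoid α] [TopologicalSpace α] {f : ι → α}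
    (h : ∑' i, f i ≠ 0) : Summable f :=
  by_contra fun hf => h (tsum_eq_zero_of_not_summable hf)

section RootAsymptotics

variable {u v : ℕ → ℝ} {ρ θ C : ℝ}

lemma tendsto_const_rpow_inv_natCast (hC : C ≠ 0) :
    Tendsto (fun n : ℕ => C ^ ((n : ℝ)⁻¹)) atTop (𝓝 1) := by
  simpa using tendsto_const_nhds.rpow (tendsto_inv_atTop_nhds_zero_nat (𝕜 := ℝ)) (.inl hC)

lemma tendsto_const_mul_pow_rpow_inv (hC : 0 < C) (hθ : 0 ≤ θ) :
    Tendsto (fun n : ℕ => (C * θ ^ n) ^ ((n : ℝ)⁻¹)) atTop (𝓝 θ) := by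
  have h := (tendsto_const_rpow_inv_natCast hC.ne').mul_const θ
  rw [one_mul] at h
  refine h.congr' ?_
  filter_upwards [eventually_ge_atTop 1] with n hn
  rw [Real.mul_rpow hC.le (by positivity), ← Real.rpow_natCast, ← Real.rpow_mul hθ,
    mul_inv_cancel₀ (by positivity), Real.rpow_one]

lemma eventually_ne_zero_of_tendsto_rpow_inv
    (hu : Tendsto (fun n => u n ^ ((n : ℝ)⁻¹)) atTop (𝓝 ρ)) (hρ : 0 < ρ) :
    ∀ᶠ n in atTop, u n ≠ 0 := by
  filter_upwards [hu.eventually_ne hρ.ne', eventually_ge_atTop 1] with n hn hn1 hu0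
  exact hn (by rw [hu0, Real.zero_rpow (by positivity)])

lemma Filter.Tendsto.rpow_inv_of_tendsto_div
    (hv : Tendsto (fun n => v n ^ ((n : ℝ)⁻¹)) atTop (𝓝 ρ))
    (hvu : Tendsto (fun n => v n / u n) atTop (𝓝 C)) (hC : 0 < C) (hv0 : ∀ n, 0 ≤ v n) :
    Tendsto (fun n => u n ^ ((n : ℝ)⁻¹)) atTop (𝓝 ρ) := by
  have hroot : Tendsto (fun n : ℕ => (v n / u n) ^ ((n : ℝ)⁻¹)) atTop (𝓝 1) := by
    simpa using hvu.rpow (tendsto_inv_atTop_nhds_zero_nat (𝕜 := ℝ)) (.inl hC.ne')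
  have h := hv.div hroot one_ne_zero
  rw [div_one] at h
  refine h.congr' ?_
  filter_upwards [hvu.eventually_const_lt hC] with n hn
  have hvn : 0 < v n := (hv0 n).lt_of_ne fun h => by simp [← h] at hn
  rw [Pi.div_apply, ← Real.div_rpow (hv0 n) hn.le, div_div_cancel₀ hvn.ne']

lemma eventually_forall_ge_div_pow_mul_pow_le (hθ : 0 < θ)
    (h : ∀ᶠ n in atTop, θ * u n ≤ u (n + 1)) :
    ∀ᶠ N in atTop, ∀ n ≥ N, u N / θ ^ N * θ ^ n ≤ u n := by
  obtain ⟨N₀, hN₀⟩ := eventually_atTop.1 h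
  filter_upwards [eventually_ge_atTop N₀] with N hN n hn
  induction n, hn using Nat.le_induction with
  | base => rw [div_mul_cancel₀ _ (by positivity)]
  | succ n hn ih =>
    calc u N / θ ^ N * θ ^ (n + 1) = (u N / θ ^ N * θ ^ n) * θ := by ring
      _ ≤ u n * θ := by gcongr
      _ ≤ u (n + 1) := by linarith [hN₀ n (hN.trans hn)]

lemma le_of_tendsto_rpow_inv_of_mul_le_succ
    (hu : Tendsto (fun n => u n ^ ((n : ℝ)⁻¹)) atTop (𝓝 ρ)) (hpos : ∀ᶠ n in atTop, 0 < u n)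
    (hθ : 0 < θ) (h : ∀ᶠ n in atTop, θ * u n ≤ u (n + 1)) : θ ≤ ρ := by
  obtain ⟨N, hN, huN⟩ := ((eventually_forall_ge_div_pow_mul_pow_le hθ h).and hpos).exists
  refine le_of_tendsto_of_tendsto
    (tendsto_const_mul_pow_rpow_inv (C := u N / θ ^ N) (by positivity) hθ.le) hu ?_
  filter_upwards [eventually_ge_atTop N] with n hn
  exact Real.rpow_le_rpow (by positivity) (hN n hn) (by positivity)

lemma le_of_tendsto_rpow_inv_of_succ_le_mul
    (hu : Tendsto (fun n => u n ^ ((n : ℝ)⁻¹)) atTop (𝓝 ρ)) (hnn : ∀ᶠ n in atTop, 0 ≤ u n)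
    (hθ : 0 < θ) (h : ∀ᶠ n in atTop, u (n + 1) ≤ θ * u n) : ρ ≤ θ := by
  have hneg : ∀ᶠ n in atTop, θ * -u n ≤ -u (n + 1) := h.mono fun n hn => by linarith
  obtain ⟨N, hN⟩ := (eventually_forall_ge_div_pow_mul_pow_le hθ hneg).exists
  simp only [neg_div, neg_mul, neg_le_neg_iff] at hN
  refine le_of_tendsto_of_tendsto hu
    (tendsto_const_mul_pow_rpow_inv (C := |u N / θ ^ N| + 1) (by positivity) hθ.le) ?_
  filter_upwards [hnn, eventually_ge_atTop N] with n hn0 hn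
  refine Real.rpow_le_rpow hn0 ((hN n hn).trans ?_) (by positivity)
  gcongr
  exact (le_abs_self _).trans (lt_add_one _).le

lemma frequently_succ_le_mul_of_tendsto_rpow_inv
    (hu : Tendsto (fun n => u n ^ ((n : ℝ)⁻¹)) atTop (𝓝 ρ)) (hpos : ∀ᶠ n in atTop, 0 < u n)
    (hθ : ρ < θ) : ∃ᶠ n in atTop, u (n + 1) ≤ θ * u n := by
  have hρ : 0 ≤ ρ := ge_of_tendsto hu (hpos.mono fun n hn => by positivity)
  refine fun hev => hθ.not_ge (le_of_tendsto_rpow_inv_of_mul_le_succ hu hpos (by linarith) ?_)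
  exact hev.mono fun n hn => (not_le.1 hn).le

lemma eq_of_tendsto_rpow_inv_of_tendsto_succ_div
    (hu : Tendsto (fun n => u n ^ ((n : ℝ)⁻¹)) atTop (𝓝 ρ)) (hpos : ∀ᶠ n in atTop, 0 < u n)
    {l : ℝ} (hl : Tendsto (fun n => u (n + 1) / u n) atTop (𝓝 l)) : l = ρ := by
  apply le_antisymm
  · refine le_of_forall_gt_imp_ge_of_dense fun θ hθ => ?_
    refine le_of_tendsto_of_frequently hl ?_
    exact ((frequently_succ_le_mul_of_tendsto_rpow_inv hu hpos hθ).and_eventually hpos).mono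
      fun n hn => (div_le_iff₀ hn.2).2 hn.1
  · have hl0 : 0 ≤ l := ge_of_tendsto hl
      ((hpos.and (tendsto_add_atTop_nat 1 hpos)).mono fun n hn => (div_pos hn.2 hn.1).le)
    refine le_of_forall_gt_imp_ge_of_dense fun θ hθ => ?_
    refine le_of_tendsto_rpow_inv_of_succ_le_mul hu (hpos.mono fun n hn => hn.le) (by linarith) ?_
    filter_upwards [hl.eventually_lt_const hθ, hpos] with n hn hun
    exact ((div_lt_iff₀ hun).1 hn).le

end RootAsymptotics

section Scheffe

variable {ι : Type*} {b : ℕ → ι → ℝ} {p : ι → ℝ}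

lemma tendsto_tsum_abs_sub_of_tendsto (hp : ∀ i, 0 ≤ p i) (hp1 : ∑' i, p i = 1)
    (hb : ∀ᶠ n in atTop, (∀ i, 0 ≤ b n i) ∧ ∑' i, b n i = 1)
    (hlim : ∀ i, Tendsto (fun n => b n i) atTop (𝓝 (p i))) :
    Tendsto (fun n => ∑' i, |b n i - p i|) atTop (𝓝 0) := by
  have hps : Summable p := summable_of_tsum_ne_zero (hp1 ▸ one_ne_zero)
  have hmin : Tendsto (fun n => ∑' i, min (b n i) (p i)) atTop (𝓝 1) := by
    rw [← hp1]
    refine tendsto_tsum_of_dominated_convergence hps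
      (fun i => by simpa using (hlim i).min (tendsto_const_nhds (x := p i))) ?_
    filter_upwards [hb] with n hn i
    rw [Real.norm_of_nonneg (le_min (hn.1 i) (hp i))]
    exact min_le_right _ _
  have heq : (fun n => ∑' i, |b n i - p i|) =ᶠ[atTop]
      fun n => 2 - 2 * ∑' i, min (b n i) (p i) := by
    filter_upwards [hb] with n ⟨hbn, hb1⟩
    have hbs : Summable (b n) := summable_of_tsum_ne_zero (hb1 ▸ one_ne_zero)
    have hmins : Summable fun i => min (b n i) (p i) :=
      hps.of_nonneg_of_le (fun i => le_min (hbn i) (hp i)) fun i => min_le_right _ _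
    have hid : ∀ i, |b n i - p i| = b n i + p i - 2 * min (b n i) (p i) := fun i => by
      rcases le_total (b n i) (p i) with h | h
      · rw [abs_of_nonpos (by linarith), min_eq_left h]; ring
      · rw [abs_of_nonneg (by linarith), min_eq_right h]; ring
    rw [tsum_congr hid, (hbs.add hps).tsum_sub (hmins.mul_left 2), hbs.tsum_add hps,
      tsum_mul_left, hb1, hp1]
    ring
  simpa using (tendsto_const_nhds.sub (hmin.const_mul 2)).congr' heq.symm

lemma tendsto_tsum_mul_of_tendsto_tsum_abs_sub {f : ι → ℝ} {M : ℝ} (hf : ∀ i, |f i| ≤ M)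
    (hps : Summable p) (hbs : ∀ᶠ n in atTop, Summable (b n))
    (h : Tendsto (fun n => ∑' i, |b n i - p i|) atTop (𝓝 0)) :
    Tendsto (fun n => ∑' i, b n i * f i) atTop (𝓝 (∑' i, p i * f i)) := by
  have hpf : Summable fun i => p i * f i :=
    .of_norm_bounded (hps.abs.mul_left M) fun i => by
      rw [Real.norm_eq_abs, abs_mul, mul_comm]; gcongr; exact hf i
  rw [tendsto_iff_norm_sub_tendsto_zero]
  refine squeeze_zero' (.of_forall fun n => norm_nonneg _) ?_ (by simpa using h.const_mul M)
  filter_upwards [hbs] with n hbn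
  have hdom : ∀ i, ‖(b n i - p i) * f i‖ ≤ M * |b n i - p i| := fun i => by
    rw [Real.norm_eq_abs, abs_mul, mul_comm]; gcongr; exact hf i
  have hsum : Summable fun i => (b n i - p i) * f i :=
    .of_norm_bounded ((hbn.sub hps).abs.mul_left M) hdom
  have hbf : Summable fun i => b n i * f i := (hsum.add hpf).congr fun i => by ring
  calc ‖∑' i, b n i * f i - ∑' i, p i * f i‖ = ‖∑' i, (b n i - p i) * f i‖ := by
        rw [← hbf.tsum_sub hpf]; simp only [sub_mul]
    _ ≤ ∑' i, M * |b n i - p i| :=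
        (norm_tsum_le_tsum_norm hsum.norm).trans
          (hsum.norm.tsum_le_tsum hdom ((hbn.sub hps).abs.mul_left M))
    _ = M * ∑' i, |b n i - p i| := tsum_mul_left

end Scheffe

section Kpow

variable {S : Type*} {K : S → S → ℝ} {n : ℕ} {x y : S}

lemma Kpow_succ (n : ℕ) (x y : S) :
    Kpow K (n + 1) x y = ∑' z, Kpow K n x z * K z y := rfl

lemma Kpow_nonneg (hK : ∀ x y, 0 ≤ K x y) (n : ℕ) (x y : S) : 0 ≤ Kpow K n x y := by
  induction n generalizing y with
  | zero => unfold Kpow; split_ifs <;> norm_num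
  | succ n ih => exact tsum_nonneg fun z => mul_nonneg (ih z) (hK z y)

lemma mul_le_Kpow_succ (hK : ∀ x y, 0 ≤ K x y) (h : 0 < Kpow K (n + 1) x y) (z : S) :
    Kpow K n x z * K z y ≤ Kpow K (n + 1) x y :=
  (summable_of_tsum_ne_zero h.ne').le_tsum z fun w _ =>
    mul_nonneg (Kpow_nonneg hK n x w) (hK w y)

lemma reflTransGen_of_Kpow_pos (hK : ∀ x y, 0 ≤ K x y) (h : 0 < Kpow K n x y) :
    Relation.ReflTransGen (fun z w => 0 < K z w) x y := by
  induction n generalizing y with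
  | zero =>
    unfold Kpow at h
    split_ifs at h with hxy
    · exact hxy ▸ .refl
    · exact absurd h (lt_irrefl 0)
  | succ n ih =>
    obtain ⟨z, hz⟩ : ∃ z, 0 < Kpow K n x z * K z y := by
      by_contra! hz
      exact h.not_ge (tsum_nonpos hz)
    have hKz := Kpow_nonneg hK n x z
    exact (ih (pos_of_mul_pos_left hz (hK z y))).tail (pos_of_mul_pos_right hz hKz)

lemma pos_of_forall_apply_mul_le (hK : ∀ x y, 0 ≤ K x y)
    (hirr : ∀ x y, ∃ n, 0 < Kpow K n x y) {π : S → ℝ} {ρ : ℝ} (hρ : 0 ≤ ρ)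
    (hπ : ∀ z y, π z * K z y ≤ ρ * π y) (hx : 0 < π x) (y : S) : 0 < π y := by
  obtain ⟨n, hn⟩ := hirr x y
  have hxy := reflTransGen_of_Kpow_pos hK hn
  clear hn
  induction hxy with
  | refl => exact hx
  | tail _ hzy ih => exact pos_of_mul_pos_right ((mul_pos ih hzy).trans_le (hπ _ _)) hρ

lemma summable_of_forall_apply_mul_le (hK : ∀ x y, 0 ≤ K x y) {π : S → ℝ} {ρ : ℝ} {z : S}
    (hπs : Summable π) (hz : 0 < π z) (hπ : ∀ y, π z * K z y ≤ ρ * π y) : Summable (K z) :=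
  (hπs.mul_left (ρ / π z)).of_nonneg_of_le (hK z) fun y => by
    rw [div_mul_eq_mul_div, le_div_iff₀ hz, mul_comm]
    exact hπ y

end Kpow

def IsYaglomLimit {S : Type*} (K : S → S → ℝ) (x : S) (π : S → ℝ) : Prop :=
  ∀ y, Tendsto (fun n : ℕ => Kpow K n x y / ∑' z, Kpow K n x z) atTop (𝓝 (π y))

namespace IsYaglomLimit

variable {S : Type*} {K : S → S → ℝ} {x y : S} {π : S → ℝ} {ρ : ℝ}

lemma eventually_tsum_Kpow_pos (hK : ∀ x y, 0 ≤ K x y) (h : IsYaglomLimit K x π)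
    (hy : 0 < π y) : ∀ᶠ n in atTop, 0 < ∑' z, Kpow K n x z := by
  filter_upwards [(h y).eventually_const_lt hy] with n hn
  exact (tsum_nonneg fun z => Kpow_nonneg hK n x z).lt_of_ne fun h0 => by simp [← h0] at hn

lemma tendsto_tsum_Kpow_rpow_inv (hK : ∀ x y, 0 ≤ K x y) (h : IsYaglomLimit K x π)
    (hy : 0 < π y) (hρ : Tendsto (fun n : ℕ => Kpow K n x y ^ ((n : ℝ)⁻¹)) atTop (𝓝 ρ)) :
    Tendsto (fun n : ℕ => (∑' z, Kpow K n x z) ^ ((n : ℝ)⁻¹)) atTop (𝓝 ρ) :=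
  hρ.rpow_inv_of_tendsto_div (h y) hy fun n => Kpow_nonneg hK n x y

lemma apply_mul_le (hK : ∀ x y, 0 ≤ K x y) (h : IsYaglomLimit K x π)
    (hs : ∀ᶠ n in atTop, 0 < ∑' z, Kpow K n x z)
    (hroot : Tendsto (fun n : ℕ => (∑' z, Kpow K n x z) ^ ((n : ℝ)⁻¹)) atTop (𝓝 ρ))
    (hρ : 0 < ρ) (hρy : Tendsto (fun n : ℕ => Kpow K n x y ^ ((n : ℝ)⁻¹)) atTop (𝓝 ρ))
    (z : S) : π z * K z y ≤ ρ * π y := by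
  have hstep : ∀ᶠ n in atTop, Kpow K n x z * K z y ≤ Kpow K (n + 1) x y :=
    (tendsto_add_atTop_nat 1).eventually (eventually_ne_zero_of_tendsto_rpow_inv hρy hρ)
      |>.mono fun n hn => mul_le_Kpow_succ hK ((Kpow_nonneg hK _ x y).lt_of_ne' hn) z
  have key : ∀ θ, ρ < θ → π z * K z y ≤ θ * π y := fun θ hθ => by
    refine le_of_tendsto_of_tendsto_of_frequently ((h z).mul_const (K z y))
      (((h y).comp (tendsto_add_atTop_nat 1)).const_mul θ) ?_
    refine ((frequently_succ_le_mul_of_tendsto_rpow_inv hroot hs hθ).and_eventually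
      (hstep.and (hs.and ((tendsto_add_atTop_nat 1).eventually hs)))).mono ?_
    rintro n ⟨hratio, hzy, hs₀, hs₁⟩
    have hθ₀ : 0 < θ := by linarith
    calc Kpow K n x z / (∑' w, Kpow K n x w) * K z y
        = Kpow K n x z * K z y / ∑' w, Kpow K n x w := div_mul_eq_mul_div _ _ _
      _ ≤ Kpow K (n + 1) x y / ((∑' w, Kpow K (n + 1) x w) / θ) := by
        gcongr
        · exact Kpow_nonneg hK _ x y
        · exact (div_le_iff₀ hθ₀).2 (by linarith)
      _ = θ * (Kpow K (n + 1) x y / ∑' w, Kpow K (n + 1) x w) := by field_simp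
  have hlim : Tendsto (fun θ => θ * π y) (𝓝[>] ρ) (𝓝 (ρ * π y)) :=
    (tendsto_id.mul_const _).mono_left nhdsWithin_le_nhds
  exact ge_of_tendsto hlim (eventually_nhdsWithin_of_forall key)

lemma tendsto_Kpow_succ_div_tsum (hK : ∀ x y, 0 ≤ K x y) (h : IsYaglomLimit K x π)
    (hπ : ∀ y, 0 ≤ π y) (hπ1 : ∑' y, π y = 1) (hKy : ∀ z, K z y ≤ 1)
    (hs : ∀ᶠ n in atTop, 0 < ∑' z, Kpow K n x z) :
    Tendsto (fun n => Kpow K (n + 1) x y / ∑' z, Kpow K n x z) atTop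
      (𝓝 (∑' z, π z * K z y)) := by
  have hb : ∀ᶠ n in atTop, (∀ z, 0 ≤ Kpow K n x z / ∑' w, Kpow K n x w) ∧
      ∑' z, Kpow K n x z / ∑' w, Kpow K n x w = 1 := by
    filter_upwards [hs] with n hn
    exact ⟨fun z => div_nonneg (Kpow_nonneg hK n x z) hn.le,
      by rw [tsum_div_const, div_self hn.ne']⟩
  have hbs := hb.mono fun n hn => summable_of_tsum_ne_zero (hn.2 ▸ one_ne_zero)
  have hπs : Summable π := summable_of_tsum_ne_zero (hπ1 ▸ one_ne_zero)
  refine (tendsto_tsum_mul_of_tendsto_tsum_abs_sub (M := 1)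
    (fun z => (abs_of_nonneg (hK z y)).trans_le (hKy z)) hπs hbs
    (tendsto_tsum_abs_sub_of_tendsto hπ hπ1 hb h)).congr fun n => ?_
  rw [Kpow_succ, ← tsum_div_const]
  exact tsum_congr fun z => div_mul_eq_mul_div _ _ _

lemma tendsto_tsum_Kpow_succ_div (h : IsYaglomLimit K x π) (hy : 0 < π y) {μ : ℝ}
    (hμ : Tendsto (fun n => Kpow K (n + 1) x y / ∑' z, Kpow K n x z) atTop (𝓝 μ)) :
    Tendsto (fun n => (∑' z, Kpow K (n + 1) x z) / ∑' z, Kpow K n x z) atTop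
      (𝓝 (μ / π y)) := by
  have hy' := (h y).comp (tendsto_add_atTop_nat 1)
  refine (hμ.div hy' hy.ne').congr' ?_
  filter_upwards [hy'.eventually_const_lt hy] with n hn
  have hK : Kpow K (n + 1) x y ≠ 0 := fun h0 => by simp [Function.comp, h0] at hn
  exact div_div_div_cancel_left' _ _ hK

end IsYaglomLimit

theorem yaglom_limit_rho_invariant_general {S : Type*} (K : S → S → ℝ)
    (hnn : ∀ x y, 0 ≤ K x y)
    (hsub : ∀ x, ∑' y, K x y ≤ 1)
    (hirr : ∀ x y : S, ∃ n, 0 < Kpow K n x y)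
    (ρ : ℝ) (hρpos : 0 < ρ)
    (hρ : ∀ x y : S,
      Tendsto (fun n : ℕ => (Kpow K n x y) ^ ((n : ℝ)⁻¹)) atTop (𝓝 ρ))
    (x : S) (π : S → ℝ) (hπnn : ∀ y, 0 ≤ π y) (hπ1 : ∑' y, π y = 1)
    (hyag : ∀ y : S,
      Tendsto (fun n : ℕ => Kpow K n x y / ∑' z, Kpow K n x z) atTop (𝓝 (π y))) :
    ∀ y : S, ∑' z, π z * K z y = ρ * π y := by
  have hY : IsYaglomLimit K x π := hyag
  obtain ⟨y₀, hy₀⟩ : ∃ y, 0 < π y := by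
    by_contra! h
    simp [fun y => le_antisymm (h y) (hπnn y)] at hπ1
  have hs := hY.eventually_tsum_Kpow_pos hnn hy₀
  have hroot := hY.tendsto_tsum_Kpow_rpow_inv hnn hy₀ (hρ x y₀)
  have hsubinv : ∀ z y, π z * K z y ≤ ρ * π y := fun z y =>
    hY.apply_mul_le hnn hs hroot hρpos (hρ x y) z
  have hpos : ∀ y, 0 < π y := pos_of_forall_apply_mul_le hnn hirr hρpos.le hsubinv hy₀
  have hKle : ∀ z y, K z y ≤ 1 := fun z y =>
    ((summable_of_forall_apply_mul_le hnn (summable_of_tsum_ne_zero (hπ1 ▸ one_ne_zero))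
      (hpos z) (hsubinv z)).le_tsum y fun w _ => hnn z w).trans (hsub z)
  intro y
  have hratio := hY.tendsto_tsum_Kpow_succ_div (hpos y)
    (hY.tendsto_Kpow_succ_div_tsum hnn hπnn hπ1 (hKle · y) hs)
  rw [← eq_of_tendsto_rpow_inv_of_tendsto_succ_div hroot hs hratio, div_mul_cancel₀ _ (hpos y).ne']

/-- A Yaglom limit of an irreducible, aperiodic, substochastic kernel is a
`ρ`-invariant quasi-stationary distribution. -/
theorem yaglom_limit_rho_invariant {S : Type*} [Countable S] (K : S → S → ℝ)
    (hnn : ∀ x y, 0 ≤ K x y)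
    (hsub : ∀ x, ∑' y, K x y ≤ 1)
    (hirr : ∀ x y : S, ∃ n, 0 < Kpow K n x y)
    (haper : ∀ x : S, ∀ m : ℕ, (∀ n, 0 < n → 0 < Kpow K n x x → m ∣ n) → m = 1)
    (ρ : ℝ) (hρpos : 0 < ρ) (hρle : ρ ≤ 1)
    (hρ : ∀ x y : S,
      Tendsto (fun n : ℕ => (Kpow K n x y) ^ ((n : ℝ)⁻¹)) atTop (𝓝 ρ))
    (x : S) (π : S → ℝ) (hπnn : ∀ y, 0 ≤ π y) (hπ1 : ∑' y, π y = 1)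
    (hyag : ∀ y : S,
      Tendsto (fun n : ℕ => Kpow K n x y / ∑' z, Kpow K n x z) atTop (𝓝 (π y))) :
    ∀ y : S, ∑' z, π z * K z y = ρ * π y :=
  yaglom_limit_rho_invariant_general K hnn hsub hirr ρ hρpos hρ x π hπnn hπ1 hyag
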